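/- Let a* be a Lasso minimizer and let J = {j : |H_jᵀ(y − Ha*)| = λ} contain the support of a*. Then the restriction of a* to J is a minimizer of the restricted Lasso problem a_J ↦ (1/2)‖y − H_J a_J‖₂² + λ‖a_J‖₁, where H_J is the submatrix of H with columns in J. -/
import Mathlib


open Finset

/-- The restriction of a vector to a set of indices (zero outside). -/
def restrictTo {m : ℕ} (J : Finset (Fin m)) (a : Fin m → ℝ) : Fin m → ℝ :=
  fun j => if j ∈ J then a j else 0

theorem lasso_restricted_minimizer (p m : ℕ) (H : Matrix (Fin p) (Fin m) ℝ)
    (y : Fin p → ℝ) (lam : ℝ) (hlam : 0 < lam) (a : Fin m → ℝ)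
    (hmin : ∀ b : Fin m → ℝ,
      (1/2) * ∑ i, (y i - H.mulVec a i)^2 + lam * ∑ j, |a j| ≤
      (1/2) * ∑ i, (y i - H.mulVec b i)^2 + lam * ∑ j, |b j|)
    (J : Finset (Fin m))
    (hJ : ∀ j : Fin m, j ∈ J ↔ |∑ i, H i j * (y i - H.mulVec a i)| = lam)
    (hsupp : ∀ j : Fin m, a j ≠ 0 → j ∈ J) :
    ∀ b : Fin m → ℝ, (∀ j ∉ J, b j = 0) →
      (1/2) * ∑ i, (y i - H.mulVec (restrictTo J a) i)^2 + lam * ∑ j ∈ J, |restrictTo J a j| ≤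
      (1/2) * ∑ i, (y i - H.mulVec b i)^2 + lam * ∑ j ∈ J, |b j| := by
  intro b hb
  have ha : restrictTo J a = a := by
    funext j
    by_cases h : j ∈ J
    · simp [restrictTo, h]
    · simp [restrictTo, h]
      by_contra hne
      exact h (hsupp j fun hz => hne hz.symm)
  have hsum : ∀ c : Fin m → ℝ, (∀ j ∉ J, c j = 0) →
      ∑ j ∈ J, |c j| = ∑ j, |c j| := by
    intro c hc
    apply Finset.sum_subset J.subset_univ
    intro j _ hj
    rw [hc j hj, abs_zero]
  have hbsum := hsum b hb
  have hasum : ∑ j ∈ J, |a j| = ∑ j, |a j| :=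
    hsum a fun j hj => by by_contra hne; exact hj (hsupp j hne)
  rw [ha, hasum, hbsum]
  exact hmin b
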